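/- Let Q = (Q_L, Q_R) be a discrete policy and μ > 0. For any initial vector W⁽⁰⁾ ∈ ℝ^I with W⁽⁰⁾_i ≥ 0 for all i and h·∑_i W⁽⁰⁾_i = 1, define iteratively W^{(s+1)} as the unique solution of (μI + A(Q)) W^{(s+1)} = μ W^{(s)}. Then the whole sequence W^{(s)} converges, as s → ∞, to the unique M ∈ ℝ^I satisfying A(Q)M = 0, h·∑_i M_i = 1 and M ≥ 0. -/

import Mathlib

open Matrix Filter Topology

noncomputable section

/-- Grid step `h = 1/I`. -/
def hh (I : ℕ) : ℝ := (I : ℝ)⁻¹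

/-- Discrete periodic Laplacian `(Δ♯U)_i = (U_{i-1} - 2U_i + U_{i+1})/h²`. -/
def lapD (I : ℕ) (U : ZMod I → ℝ) (i : ZMod I) : ℝ :=
  (U (i - 1) - 2 * U i + U (i + 1)) / hh I ^ 2

/-- Left discrete derivative `(D_L U)_i = (U_i - U_{i-1})/h`. -/
def DLd (I : ℕ) (U : ZMod I → ℝ) (i : ZMod I) : ℝ := (U i - U (i - 1)) / hh I

/-- Right discrete derivative `(D_R U)_i = (U_{i+1} - U_i)/h`. -/
def DRd (I : ℕ) (U : ZMod I → ℝ) (i : ZMod I) : ℝ := (U (i + 1) - U i) / hh I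

/-- Positive part `a⁺ = max(a,0)`. -/
def pp (a : ℝ) : ℝ := max a 0

/-- Negative part `a⁻ = min(a,0)`. -/
def np (a : ℝ) : ℝ := min a 0

/-- The discrete Fokker–Planck matrix `A(Q)` associated to a discrete policy
`Q = (Q_L, Q_R)`: `A(Q)_{i,i} = 2ε/h² + Q_{L,i}⁺/h − Q_{R,i}⁻/h`,
`A(Q)_{i,i−1} = −ε/h² + Q_{R,i−1}⁻/h`, `A(Q)_{i,i+1} = −ε/h² − Q_{L,i+1}⁺/h`,
all other entries zero (indices mod `I`). -/
def FPmat (I : ℕ) (ε : ℝ) (QL QR : ZMod I → ℝ) : Matrix (ZMod I) (ZMod I) ℝ :=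
  fun i j =>
    (if j = i then 2 * ε / hh I ^ 2 + pp (QL i) / hh I - np (QR i) / hh I else 0)
    + (if j = i - 1 then -ε / hh I ^ 2 + np (QR (i - 1)) / hh I else 0)
    + (if j = i + 1 then -ε / hh I ^ 2 - pp (QL (i + 1)) / hh I else 0)

end

/-! The off-diagonal entries of `A = A(Q)` are nonpositive and its columns sum to zero, so
`B = μ + A` obeys a discrete minimum principle: `xᵀB ≥ 0` forces `x ≥ 0`. Hence `B` is
invertible and `P = μB⁻¹` is column-stochastic; since the subdiagonal of `A` is strictly
negative, positivity propagates around the cycle `i ↦ i + 1` and every entry of `P` is strictly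
positive. Such a matrix contracts the ℓ¹ norm of zero-sum vectors by a factor `θ < 1`, so
`W⁽ˢ⁾ = Pˢ W⁽⁰⁾` is Cauchy, its limit is a fixed point of `P` (equivalently `AM = 0`) of the
same mass, and a fixed point of given mass is unique. -/

open Finset

section MinimumPrinciple

variable {n : Type*} [Fintype n] {B : Matrix n n ℝ}

theorem nonneg_of_nonneg_vecMul (hoff : ∀ i j, i ≠ j → B i j ≤ 0)
    (hcol : ∀ j, 0 < ∑ i, B i j) {x : n → ℝ} (hx : 0 ≤ x ᵥ* B) : 0 ≤ x := by
  intro k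
  obtain ⟨k₀, -, hmin⟩ := exists_min_image univ x ⟨k, mem_univ k⟩
  by_contra! hk
  have hneg : x k₀ < 0 := (hmin k (mem_univ k)).trans_lt hk
  have hle : (x ᵥ* B) k₀ ≤ x k₀ * ∑ i, B i k₀ :=
    calc (x ᵥ* B) k₀ = ∑ i, x i * B i k₀ := rfl
      _ ≤ ∑ i, x k₀ * B i k₀ := sum_le_sum fun i _ => by
          rcases eq_or_ne i k₀ with rfl | hi
          · rfl
          · exact mul_le_mul_of_nonpos_right (hmin i (mem_univ i)) (hoff i k₀ hi)
      _ = x k₀ * ∑ i, B i k₀ := (mul_sum _ _ _).symm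
  have hx₀ : 0 ≤ (x ᵥ* B) k₀ := hx k₀
  linarith [mul_neg_of_neg_of_pos hneg (hcol k₀)]

theorem isUnit_of_nonpos_of_sum_pos [DecidableEq n] (hoff : ∀ i j, i ≠ j → B i j ≤ 0)
    (hcol : ∀ j, 0 < ∑ i, B i j) : IsUnit B := by
  refine vecMul_injective_iff_isUnit.mp fun x y hxy => ?_
  have hker : (x - y) ᵥ* B = 0 := by
    rw [sub_vecMul]
    exact sub_eq_zero.mpr hxy
  have hge := nonneg_of_nonneg_vecMul hoff hcol hker.ge
  have hle := nonneg_of_nonneg_vecMul hoff hcol (x := -(x - y))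
    (by rw [neg_vecMul, hker, neg_zero])
  exact sub_eq_zero.mp (le_antisymm (neg_nonneg.mp hle) hge)

theorem inv_row_vecMul [DecidableEq n] (h : IsUnit B.det) (i : n) :
    B⁻¹ i ᵥ* B = Pi.single i 1 := by
  change (B⁻¹ * B) i = _
  rw [nonsing_inv_mul B h]
  ext k
  simp [one_apply, Pi.single_apply, eq_comm]

end MinimumPrinciple

theorem ZMod.forall_of_imp_add_one {I : ℕ} [NeZero I] {p : ZMod I → Prop} {k : ZMod I}
    (hk : p k) (hsucc : ∀ j, p j → p (j + 1)) (j : ZMod I) : p j := by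
  have hiter : ∀ m : ℕ, p (k + m) := fun m => by
    induction m with
    | zero => simpa using hk
    | succ m ih => simpa [add_assoc] using hsucc _ ih
  simpa using hiter (j - k).val

theorem pos_of_nonneg_vecMul {I : ℕ} [NeZero I] {B : Matrix (ZMod I) (ZMod I) ℝ}
    (hoff : ∀ i j, i ≠ j → B i j ≤ 0) (hcol : ∀ j, 0 < ∑ i, B i j)
    (hsub : ∀ k, B (k + 1) k < 0) {x : ZMod I → ℝ} (hx : 0 ≤ x ᵥ* B) (hx₀ : x ᵥ* B ≠ 0)
    (k : ZMod I) : 0 < x k := by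
  have hnn := nonneg_of_nonneg_vecMul hoff hcol hx
  have hsucc : ∀ j, x j = 0 → x (j + 1) = 0 := by
    intro j hj
    have hterm : ∀ i ∈ univ, x i * B i j ≤ 0 := fun i _ => by
      rcases eq_or_ne i j with rfl | hij
      · simp [hj]
      · exact mul_nonpos_of_nonneg_of_nonpos (hnn i) (hoff i j hij)
    have hzero : ∑ i, x i * B i j = 0 := le_antisymm (sum_nonpos hterm) (hx j)
    have := (sum_eq_zero_iff_of_nonpos hterm).mp hzero (j + 1) (mem_univ _)
    exact (mul_eq_zero.mp this).resolve_right (hsub j).ne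
  refine (hnn k).lt_of_ne fun hk => hx₀ ?_
  have : x = 0 := funext (ZMod.forall_of_imp_add_one (p := (x · = 0)) hk.symm hsucc)
  simp [this]

section Resolvent

variable {n : Type*} [DecidableEq n] {μ : ℝ} {A : Matrix n n ℝ}

theorem smul_one_add_apply_of_ne {i j : n} (h : i ≠ j) : (μ • 1 + A) i j = A i j := by
  simp [one_apply_ne h]

theorem smul_one_add_apply_nonpos (hoff : ∀ i j, i ≠ j → A i j ≤ 0) {i j : n} (h : i ≠ j) :
    (μ • 1 + A) i j ≤ 0 :=
  (smul_one_add_apply_of_ne h).trans_le (hoff i j h)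

variable [Fintype n]

theorem sum_smul_one_add_apply (hcol : ∀ j, ∑ i, A i j = 0) (j : n) :
    ∑ i, (μ • 1 + A) i j = μ := by
  simp [sum_add_distrib, one_apply, hcol]

variable (μ A) in
noncomputable def scaledResolvent : Matrix n n ℝ := μ • (μ • 1 + A)⁻¹

variable (hμ : 0 < μ) (hoff : ∀ i j, i ≠ j → A i j ≤ 0) (hcol : ∀ j, ∑ i, A i j = 0)
include hμ hoff hcol

theorem isUnit_det_smul_one_add : IsUnit (μ • 1 + A).det :=
  (isUnit_iff_isUnit_det _).mp <| isUnit_of_nonpos_of_sum_pos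
    (fun _ _ => smul_one_add_apply_nonpos hoff) (fun j => by rwa [sum_smul_one_add_apply hcol])

theorem scaledResolvent_mulVec_eq_iff {v w : n → ℝ} :
    (μ • 1 + A) *ᵥ w = μ • v ↔ w = scaledResolvent μ A *ᵥ v := by
  have h := isUnit_det_smul_one_add hμ hoff hcol
  rw [scaledResolvent, smul_mulVec, ← mulVec_smul]
  constructor
  · rintro hw
    rw [← hw, mulVec_mulVec, nonsing_inv_mul _ h, one_mulVec]
  · rintro rfl
    rw [mulVec_mulVec, mul_nonsing_inv _ h, one_mulVec]

theorem scaledResolvent_mulVec_eq_self_iff {v : n → ℝ} :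
    scaledResolvent μ A *ᵥ v = v ↔ A *ᵥ v = 0 := by
  rw [eq_comm, ← scaledResolvent_mulVec_eq_iff hμ hoff hcol, add_mulVec, smul_mulVec, one_mulVec,
    add_eq_left]

theorem scaledResolvent_mem_colStochastic : scaledResolvent μ A ∈ colStochastic ℝ n := by
  have h := isUnit_det_smul_one_add hμ hoff hcol
  refine ⟨fun i j => mul_nonneg hμ.le ?_, ?_⟩
  · refine nonneg_of_nonneg_vecMul (fun _ _ => smul_one_add_apply_nonpos hoff)
      (fun j => by rwa [sum_smul_one_add_apply hcol]) ?_ j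
    rw [inv_row_vecMul h]
    exact Pi.single_nonneg.mpr zero_le_one
  · have hones : 1 ᵥ* (μ • 1 + A) = μ • 1 := by
      ext j
      simpa [vecMul, dotProduct] using sum_smul_one_add_apply hcol j
    rw [scaledResolvent, vecMul_smul, ← smul_vecMul, ← hones, vecMul_vecMul,
      mul_nonsing_inv _ h, vecMul_one]

end Resolvent

theorem scaledResolvent_pos {I : ℕ} [NeZero I] [Nontrivial (ZMod I)] {μ : ℝ}
    {A : Matrix (ZMod I) (ZMod I) ℝ} (hμ : 0 < μ) (hoff : ∀ i j, i ≠ j → A i j ≤ 0)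
    (hcol : ∀ j, ∑ i, A i j = 0) (hsub : ∀ k, A (k + 1) k < 0) (i j : ZMod I) :
    0 < scaledResolvent μ A i j := by
  have h := isUnit_det_smul_one_add hμ hoff hcol
  refine mul_pos hμ <| pos_of_nonneg_vecMul (fun _ _ => smul_one_add_apply_nonpos hoff)
    (fun j => by rwa [sum_smul_one_add_apply hcol])
    (fun k => (smul_one_add_apply_of_ne (succ_ne_self k)).trans_lt (hsub k)) ?_ ?_ j
  · rw [inv_row_vecMul h]
    exact Pi.single_nonneg.mpr zero_le_one
  · rw [inv_row_vecMul h]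
    exact Pi.single_ne_zero_iff.mpr one_ne_zero

section ColStochastic

variable {n : Type*} [Fintype n] [DecidableEq n] {P : Matrix n n ℝ}

-- Subtracting `c` from every entry does not change `P *ᵥ v` when `∑ v = 0`, and leaves a
-- nonnegative matrix with column sums `1 - card n * c`.
theorem sum_abs_mulVec_le_of_sum_eq_zero (hP : P ∈ colStochastic ℝ n) {c : ℝ}
    (hc : ∀ i j, c ≤ P i j) {v : n → ℝ} (hv : ∑ j, v j = 0) :
    ∑ i, |(P *ᵥ v) i| ≤ (1 - Fintype.card n * c) * ∑ j, |v j| := by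
  have hshift : ∀ i, (P *ᵥ v) i = ∑ j, (P i j - c) * v j := fun i => by
    simp only [sub_mul, sum_sub_distrib, ← mul_sum, hv, mul_zero, sub_zero]
    rfl
  calc ∑ i, |(P *ᵥ v) i| ≤ ∑ i, ∑ j, (P i j - c) * |v j| := sum_le_sum fun i _ => by
        rw [hshift]
        refine (abs_sum_le_sum_abs _ _).trans_eq (sum_congr rfl fun j _ => ?_)
        rw [abs_mul, abs_of_nonneg (sub_nonneg.mpr (hc i j))]
    _ = ∑ j, (∑ i, (P i j - c)) * |v j| := by
        rw [sum_comm]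
        simp only [sum_mul]
    _ = (1 - Fintype.card n * c) * ∑ j, |v j| := by
        simp [mul_sum, sum_sub_distrib, sum_col_of_mem_colStochastic hP]

theorem exists_contraction_of_pos [Nonempty n] (hP : P ∈ colStochastic ℝ n)
    (hpos : ∀ i j, 0 < P i j) : ∃ θ, 0 ≤ θ ∧ θ < 1 ∧
      ∀ v : n → ℝ, ∑ j, v j = 0 → ∑ i, |(P *ᵥ v) i| ≤ θ * ∑ j, |v j| := by
  obtain ⟨⟨i₀, j₀⟩, hmin⟩ := Finite.exists_min fun p : n × n => P p.1 p.2
  have hc : ∀ i j, P i₀ j₀ ≤ P i j := fun i j => hmin (i, j)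
  have hcard : (0 : ℝ) < Fintype.card n := by exact_mod_cast Fintype.card_pos
  have hle : Fintype.card n * P i₀ j₀ ≤ 1 := by
    rw [← sum_col_of_mem_colStochastic hP j₀, ← nsmul_eq_mul, ← card_univ, ← sum_const]
    exact sum_le_sum fun i _ => hc i j₀
  exact ⟨_, by linarith, by nlinarith [hpos i₀ j₀],
    fun v hv => sum_abs_mulVec_le_of_sum_eq_zero hP hc hv⟩

theorem sum_eq_of_tendsto (hP : P ∈ colStochastic ℝ n) {W : ℕ → n → ℝ} {M : n → ℝ}
    (hW : ∀ s, W (s + 1) = P *ᵥ W s) (hM : Tendsto W atTop (𝓝 M)) :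
    ∑ i, M i = ∑ i, W 0 i := by
  have hconst : ∀ s, ∑ i, W s i = ∑ i, W 0 i := fun s => by
    induction s with
    | zero => rfl
    | succ s ih => rw [hW, sum_mulVec_of_mem_colStochastic hP, ih]
  have hsum : Tendsto (fun s => ∑ i, W s i) atTop (𝓝 (∑ i, M i)) :=
    tendsto_finsetSum _ fun i _ => ((continuous_apply i).tendsto M).comp hM
  rw [funext hconst] at hsum
  exact tendsto_nhds_unique hsum tendsto_const_nhds

theorem nonneg_of_tendsto (hP : P ∈ colStochastic ℝ n) {W : ℕ → n → ℝ} {M : n → ℝ}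
    (hW : ∀ s, W (s + 1) = P *ᵥ W s) (hW₀ : 0 ≤ W 0) (hM : Tendsto W atTop (𝓝 M)) :
    0 ≤ M := by
  refine ge_of_tendsto' hM fun s => ?_
  induction s with
  | zero => exact hW₀
  | succ s ih => rw [hW]; exact nonneg_mulVec_of_mem_colStochastic hP ih

variable [Nonempty n] (hP : P ∈ colStochastic ℝ n) (hpos : ∀ i j, 0 < P i j)
include hP hpos

theorem exists_tendsto_of_pos {W : ℕ → n → ℝ} (hW : ∀ s, W (s + 1) = P *ᵥ W s) :
    ∃ M, Tendsto W atTop (𝓝 M) := by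
  obtain ⟨θ, hθ₀, hθ₁, hcontr⟩ := exists_contraction_of_pos hP hpos
  set d : ℕ → n → ℝ := fun s => W (s + 1) - W s
  have hd : ∀ s, d (s + 1) = P *ᵥ d s := fun s => by simp only [d, mulVec_sub, ← hW]
  have hdsum : ∀ s, ∑ j, d s j = 0 := fun s => by
    simp [d, sum_sub_distrib, hW, sum_mulVec_of_mem_colStochastic hP]
  have hdecay : ∀ s, ∑ i, |d s i| ≤ θ ^ s * ∑ i, |d 0 i| := fun s => by
    induction s with
    | zero => simp
    | succ s ih =>
      rw [hd, pow_succ', mul_assoc]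
      exact (hcontr _ (hdsum s)).trans (mul_le_mul_of_nonneg_left ih hθ₀)
  refine cauchySeq_tendsto_of_complete <|
    cauchySeq_of_le_geometric θ (∑ i, |d 0 i|) hθ₁ fun s => ?_
  refine (dist_pi_le_iff (by positivity)).mpr fun i => ?_
  rw [Real.dist_eq, abs_sub_comm, mul_comm]
  exact (single_le_sum (fun j _ => abs_nonneg (d s j)) (mem_univ i)).trans (hdecay s)

theorem eq_of_mulVec_eq_self {u v : n → ℝ} (hu : P *ᵥ u = u) (hv : P *ᵥ v = v)
    (hsum : ∑ i, u i = ∑ i, v i) : u = v := by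
  obtain ⟨θ, -, hθ₁, hcontr⟩ := exists_contraction_of_pos hP hpos
  have hw : P *ᵥ (u - v) = u - v := by rw [mulVec_sub, hu, hv]
  have h := hcontr (u - v) (by simp [sum_sub_distrib, hsum])
  rw [hw] at h
  have hzero : ∑ i, |(u - v) i| = 0 := by
    nlinarith [sum_nonneg fun i (_ : i ∈ univ) => abs_nonneg ((u - v) i)]
  ext i
  simpa [sub_eq_zero] using (sum_eq_zero_iff_of_nonneg fun j _ => abs_nonneg _).mp hzero i
    (mem_univ i)

end ColStochastic

theorem mulVec_eq_self_of_tendsto {n : Type*} [Fintype n] {P : Matrix n n ℝ} {W : ℕ → n → ℝ}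
    {M : n → ℝ} (hW : ∀ s, W (s + 1) = P *ᵥ W s) (hM : Tendsto W atTop (𝓝 M)) :
    P *ᵥ M = M := by
  refine tendsto_nhds_unique ?_ (hM.comp (tendsto_add_atTop_nat 1))
  simp only [Function.comp_def, hW]
  exact ((continuous_const.matrix_mulVec continuous_id).tendsto M).comp hM

section FokkerPlanck

variable {I : ℕ} [NeZero I] {ε : ℝ} (QL QR : ZMod I → ℝ)

theorem hh_pos : 0 < hh I := inv_pos.mpr (Nat.cast_pos.mpr (Nat.pos_of_neZero I))

theorem sum_FPmat_apply (j : ZMod I) : ∑ i, FPmat I ε QL QR i j = 0 := by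
  simp only [FPmat, sum_add_distrib, eq_sub_iff_add_eq, ← sub_eq_iff_eq_add, sum_ite_eq,
    mem_univ, if_true, add_sub_cancel_right, sub_add_cancel]
  ring

theorem FPmat_apply_nonpos (hε : 0 ≤ ε) (i j : ZMod I) (hij : i ≠ j) :
    FPmat I ε QL QR i j ≤ 0 := by
  have hpos := hh_pos (I := I)
  have hdiff : -ε / hh I ^ 2 ≤ 0 :=
    div_nonpos_of_nonpos_of_nonneg (neg_nonpos.mpr hε) (by positivity)
  have hR : np (QR (i - 1)) / hh I ≤ 0 :=
    div_nonpos_of_nonpos_of_nonneg (min_le_right _ _) hpos.le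
  have hL : 0 ≤ pp (QL (i + 1)) / hh I := div_nonneg (le_max_right _ _) hpos.le
  simp only [FPmat, if_neg hij.symm]
  split_ifs <;> linarith

theorem FPmat_add_one_apply_neg [Nontrivial (ZMod I)] (hε : 0 < ε) (k : ZMod I) :
    FPmat I ε QL QR (k + 1) k < 0 := by
  have hpos := hh_pos (I := I)
  have hdiff : -ε / hh I ^ 2 < 0 := div_neg_of_neg_of_pos (neg_neg_of_pos hε) (by positivity)
  have hR : np (QR k) / hh I ≤ 0 := div_nonpos_of_nonpos_of_nonneg (min_le_right _ _) hpos.le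
  have hL : 0 ≤ pp (QL (k + 1 + 1)) / hh I := div_nonneg (le_max_right _ _) hpos.le
  simp only [FPmat, if_neg (succ_ne_self k).symm, add_sub_cancel_right, if_true]
  split_ifs <;> linarith

end FokkerPlanck

/-- the M-matrix iteration `(μI + A(Q))W^{(s+1)} = μW^{(s)}`, started from
any nonnegative `W^{(0)}` of unit discrete mass, converges (as a whole sequence) to the
unique `M` with `A(Q)M = 0`, `h·∑_i M_i = 1` and `M ≥ 0`. -/
theorem statement_12 (I : ℕ) [NeZero I] (hI : 3 ≤ I) (ε : ℝ) (hε : 0 < ε)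
    (QL QR : ZMod I → ℝ) (μ : ℝ) (hμ : 0 < μ)
    (W : ℕ → ZMod I → ℝ)
    (hW0 : ∀ i, 0 ≤ W 0 i) (hW0sum : hh I * ∑ i, W 0 i = 1)
    (hiter : ∀ s : ℕ,
      (μ • (1 : Matrix (ZMod I) (ZMod I) ℝ) + FPmat I ε QL QR).mulVec (W (s + 1))
        = μ • W s) :
    ∃ M : ZMod I → ℝ,
      ((FPmat I ε QL QR).mulVec M = 0 ∧ hh I * ∑ i, M i = 1 ∧ ∀ i, 0 ≤ M i) ∧
      (∀ M' : ZMod I → ℝ,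
        ((FPmat I ε QL QR).mulVec M' = 0 ∧ hh I * ∑ i, M' i = 1 ∧ ∀ i, 0 ≤ M' i) →
        M' = M) ∧
      Filter.Tendsto W Filter.atTop (nhds M) := by
  have : Nontrivial (ZMod I) := ZMod.nontrivial_iff.mpr (by omega)
  have hoff := FPmat_apply_nonpos (ε := ε) QL QR hε.le
  have hcol := sum_FPmat_apply (ε := ε) QL QR
  set P := scaledResolvent μ (FPmat I ε QL QR)
  have hP : P ∈ colStochastic ℝ _ := scaledResolvent_mem_colStochastic hμ hoff hcol
  have hPpos := scaledResolvent_pos hμ hoff hcol (FPmat_add_one_apply_neg QL QR hε)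
  have hfix {v : ZMod I → ℝ} := scaledResolvent_mulVec_eq_self_iff (v := v) hμ hoff hcol
  have hW : ∀ s, W (s + 1) = P *ᵥ W s := fun s =>
    (scaledResolvent_mulVec_eq_iff hμ hoff hcol).mp (hiter s)
  obtain ⟨M, hM⟩ := exists_tendsto_of_pos hP hPpos hW
  have hMsum := sum_eq_of_tendsto hP hW hM
  refine ⟨M, ⟨hfix.mp (mulVec_eq_self_of_tendsto hW hM), hMsum ▸ hW0sum,
    nonneg_of_tendsto hP hW hW0 hM⟩, ?_, hM⟩
  rintro M' ⟨hAM', hM'sum, -⟩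
  refine eq_of_mulVec_eq_self hP hPpos (hfix.mpr hAM') (mulVec_eq_self_of_tendsto hW hM) ?_
  exact mul_left_cancel₀ hh_pos.ne' (hM'sum.trans (hMsum ▸ hW0sum).symm)
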